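/- arXiv:math/0509023 — 3 statements merged into one kernel-verified Lean document; each statement's English description precedes it below -/
import Mathlib

section
/- Let n ≥ 2, let a = (a_1, …, a_n) ∈ ℝ^n have components linearly independent over ℚ, and let F be a real algebraic number field of degree n. If a is F-algebraic, then M(a) is a finite-index subgroup of 𝓞_F^×: every element of M(a) is a unit of 𝓞_F, and there exist finitely many units u_1, …, u_m of 𝓞_F such that every unit of 𝓞_F equals u_i·α for some i and some α ∈ M(a). -/
open Matrix

/-- The multiplier set of a frequency vector `a`: the set of real numbers `α`
such that some integer matrix `B` of determinant `±1` satisfies `B · a = α • a`. -/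
def MultSet {n : ℕ} (a : Fin n → ℝ) : Set ℝ :=
  {α : ℝ | ∃ B : Matrix (Fin n) (Fin n) ℤ,
    (B.det = 1 ∨ B.det = -1) ∧ ∀ i, α * a i = ∑ j, (B i j : ℝ) * a j}

/-- `a` is `F`-algebraic: for some nonzero `θ`, the numbers `θ * a i` lie in `F`
and form a `ℚ`-basis of `F`. -/
def IsFAlgebraic {n : ℕ} (F : Subfield ℝ) (a : Fin n → ℝ) : Prop :=
  ∃ θ : ℝ, θ ≠ 0 ∧ ∃ bas : Module.Basis (Fin n) ℚ F, ∀ i, (bas i : ℝ) = θ * a i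

/-- `MultSet a` is a finite-index subgroup of the unit group of the ring of
integers of `F`: every multiplier is a unit of `𝓞_F`, and finitely many units
`u i` suffice so that every unit of `𝓞_F` is some `u i` times a multiplier. -/
def MultSetFiniteIndexUnits {n : ℕ} (a : Fin n → ℝ) (F : Subfield ℝ) : Prop :=
  (∀ α ∈ MultSet a, ∃ u : (integralClosure ℤ F)ˣ,
      (((u : integralClosure ℤ F) : F) : ℝ) = α) ∧
  ∃ m : ℕ, ∃ u : Fin m → (integralClosure ℤ F)ˣ,
    ∀ v : (integralClosure ℤ F)ˣ, ∃ i : Fin m, ∃ α ∈ MultSet a,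
      (((v : integralClosure ℤ F) : F) : ℝ)
        = (((u i : integralClosure ℤ F) : F) : ℝ) * α

/-! After rescaling, `a` is a `ℚ`-basis `b` of `F`; let `L` be its `ℤ`-span. A multiplier `α`
stabilises the finitely generated `ℤ`-module spanned by the `a i`, and so does `α⁻¹` (the inverse
matrix is again unimodular); hence `α` and `α⁻¹` are integral, and `α ∈ F` because `α * b i ∈ F`.
Conversely, if `x ∈ F` satisfies `x L = L`, multiplication by `x` is an automorphism of the lattice
`L`, and its matrix exhibits `x` as a multiplier. Clearing denominators gives `c ≠ 0` with
`c 𝓞_F L ⊆ L`, so every unit `≡ 1 mod c` stabilises `L`; these units are the kernel of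
`𝓞_F^× → (𝓞_F / c)^×`, a subgroup of finite index. -/

section

open Submodule

variable {n : ℕ} {a : Fin n → ℝ} {α : ℝ}

lemma multSet_smul {c : ℝ} (hc : c ≠ 0) : MultSet (c • a) = MultSet a := by
  ext α
  refine exists_congr fun B => and_congr_right fun _ => forall_congr' fun i => ?_
  simp only [Pi.smul_apply, smul_eq_mul, mul_left_comm _ c, ← Finset.mul_sum]
  exact mul_right_inj' hc

lemma exists_inverse_of_mem_multSet (hα : α ∈ MultSet a) :
    ∃ C : Matrix (Fin n) (Fin n) ℤ, (C.det = 1 ∨ C.det = -1) ∧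
      ∀ i, α * ∑ j, (C i j : ℝ) * a j = a i := by
  obtain ⟨B, hdet, hB⟩ := hα
  have hunit : IsUnit B.det := Int.isUnit_iff.mpr hdet
  refine ⟨B⁻¹, Int.isUnit_iff.mp (B.isUnit_nonsing_inv_det hunit), fun i => ?_⟩
  calc α * ∑ j, (B⁻¹ i j : ℝ) * a j = ∑ j, (B⁻¹ i j : ℝ) * ∑ k, (B j k : ℝ) * a k := by
        rw [Finset.mul_sum]
        exact Finset.sum_congr rfl fun j _ => by rw [← hB j]; ring
    _ = ∑ k, (((B⁻¹ * B) i k : ℤ) : ℝ) * a k := by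
        simp only [Matrix.mul_apply, Finset.mul_sum, Finset.sum_mul, mul_assoc, Int.cast_sum,
          Int.cast_mul]
        exact Finset.sum_comm
    _ = a i := by simp [B.nonsing_inv_mul hunit, Matrix.one_apply]

lemma ne_zero_of_mem_multSet (ha : a ≠ 0) (hα : α ∈ MultSet a) : α ≠ 0 := by
  rintro rfl
  obtain ⟨C, -, hC⟩ := exists_inverse_of_mem_multSet hα
  exact ha (funext fun i => by simpa using (hC i).symm)

lemma inv_mem_multSet (hα : α ∈ MultSet a) : α⁻¹ ∈ MultSet a := by
  obtain ⟨C, hdet, hC⟩ := exists_inverse_of_mem_multSet hα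
  refine ⟨C, hdet, fun i => ?_⟩
  rcases eq_or_ne α 0 with rfl | hα0
  · have ha : a = 0 := funext fun i => by simpa using (hC i).symm
    simp [ha]
  · rw [← hC i, inv_mul_cancel_left₀ hα0]

lemma isIntegral_of_mem_multSet (ha : a ≠ 0) (hα : α ∈ MultSet a) : IsIntegral ℤ α := by
  obtain ⟨B, -, hB⟩ := hα
  refine isIntegral_of_smul_mem_submodule (span ℤ (Set.range a)) ?_
    (fg_span (Set.finite_range a)) α fun y hy => ?_
  · rw [Ne, span_eq_bot]
    exact fun h => ha (funext fun i => h _ ⟨i, rfl⟩)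
  · induction hy using span_induction with
    | mem y hy =>
      obtain ⟨i, rfl⟩ := hy
      rw [smul_eq_mul, hB i]
      refine sum_mem fun j _ => ?_
      rw [← zsmul_eq_mul]
      exact smul_mem _ _ (subset_span (Set.mem_range_self j))
    | zero => simp
    | add y z _ _ hy hz => rw [smul_add]; exact add_mem hy hz
    | smul c y _ hy => rw [smul_comm]; exact smul_mem _ c hy

lemma Subgroup.exists_fin_cover_of_finiteIndex {G : Type*} [Group G] (H : Subgroup G)
    [H.FiniteIndex] : ∃ m, ∃ u : Fin m → G, ∀ g, ∃ i, ∃ h ∈ H, g = u i * h := by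
  have : Finite (G ⧸ H) := H.finite_quotient_of_finiteIndex
  let e := Finite.equivFin (G ⧸ H)
  refine ⟨_, fun i => (e.symm i).out, fun g => ⟨e g, _, ?_, (mul_inv_cancel_left _ g).symm⟩⟩
  simpa only [e.symm_apply_apply] using QuotientGroup.eq.mp (QuotientGroup.out_eq' (g : G ⧸ H))

lemma Module.Basis.exists_smul_mem_span_int_of_fg {V ι : Type*} [AddCommGroup V] [Module ℚ V]
    [Finite ι] (b : Module.Basis ι ℚ V) {M : Submodule ℤ V} (hM : M.FG) :
    ∃ c : ℤ, c ≠ 0 ∧ ∀ y ∈ M, c • y ∈ span ℤ (Set.range b) := by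
  obtain ⟨s, rfl⟩ := hM
  obtain ⟨⟨c, hc⟩, hint⟩ := IsLocalization.exist_integer_multiples_of_finite (nonZeroDivisors ℤ)
    fun p : s × ι => b.repr p.1 p.2
  refine ⟨c, nonZeroDivisors.ne_zero hc, fun y hy => ?_⟩
  have hgen : span ℤ s ≤ (span ℤ (Set.range b)).comap (c • LinearMap.id) := by
    refine span_le.mpr fun g hg => (b.mem_span_iff_repr_mem ℤ _).mpr fun i => ?_
    obtain ⟨k, hk⟩ := hint (⟨g, hg⟩, i)
    exact ⟨k, by simpa using hk⟩
  exact hgen hy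

lemma Subfield.isIntegral_int_coe_iff {K : Type*} [Field K] {F : Subfield K} {x : F} :
    IsIntegral ℤ (x : K) ↔ IsIntegral ℤ x :=
  isIntegral_algHom_iff (F.subtype : F →+* K).toIntAlgHom Subtype.val_injective

variable {F : Subfield ℝ}

lemma mem_subfield_of_mem_multSet (b : Module.Basis (Fin n) ℚ F)
    (hα : α ∈ MultSet fun i => (b i : ℝ)) : α ∈ F := by
  obtain ⟨B, -, hB⟩ := hα
  obtain ⟨i⟩ := b.index_nonempty
  have hbi : (b i : ℝ) ≠ 0 := by exact_mod_cast b.ne_zero i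
  rw [← mul_div_cancel_right₀ α hbi, hB i]
  exact F.div_mem (F.sum_mem fun j _ => F.mul_mem (F.intCast_mem _) (b j).2) (b i).2

lemma exists_unit_eq_of_mem_multSet (b : Module.Basis (Fin n) ℚ F)
    (hα : α ∈ MultSet fun i => (b i : ℝ)) :
    ∃ u : (integralClosure ℤ F)ˣ, (((u : integralClosure ℤ F) : F) : ℝ) = α := by
  have hb : (fun i => (b i : ℝ)) ≠ 0 := by
    obtain ⟨i⟩ := b.index_nonempty
    exact fun h => b.ne_zero i (Subtype.ext (congrFun h i))
  lift α to F using mem_subfield_of_mem_multSet b hα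
  have hα0 : α ≠ 0 := by exact_mod_cast ne_zero_of_mem_multSet hb hα
  have hint : IsIntegral ℤ α :=
    Subfield.isIntegral_int_coe_iff.mp (isIntegral_of_mem_multSet hb hα)
  have hint' : IsIntegral ℤ α⁻¹ := Subfield.isIntegral_int_coe_iff.mp <| by
    simpa using isIntegral_of_mem_multSet hb (inv_mem_multSet hα)
  exact ⟨⟨⟨α, hint⟩, ⟨α⁻¹, hint'⟩, Subtype.ext (mul_inv_cancel₀ hα0),
    Subtype.ext (inv_mul_cancel₀ hα0)⟩, rfl⟩

lemma mem_multSet_of_mul_mem_span (b : Module.Basis (Fin n) ℚ F) (x : Fˣ)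
    (h : ∀ y ∈ span ℤ (Set.range b), x * y ∈ span ℤ (Set.range b))
    (h' : ∀ y ∈ span ℤ (Set.range b), ↑x⁻¹ * y ∈ span ℤ (Set.range b)) :
    ((x : F) : ℝ) ∈ MultSet fun i => (b i : ℝ) := by
  let bL := b.restrictScalars ℤ
  let e : span ℤ (Set.range b) ≃ₗ[ℤ] span ℤ (Set.range b) :=
    .ofLinearMap ((LinearMap.mulLeft ℤ (x : F)).restrict h)
      ((LinearMap.mulLeft ℤ (↑x⁻¹ : F)).restrict h')
      (LinearMap.ext fun y => Subtype.ext (x.mul_inv_cancel_left y))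
      (LinearMap.ext fun y => Subtype.ext (x.inv_mul_cancel_left y))
  refine ⟨(LinearMap.toMatrix bL bL e)ᵀ, ?_, fun i => ?_⟩
  · rw [Matrix.det_transpose]
    exact Int.isUnit_iff.mp (e.isUnit_det bL bL)
  · have hei : ((e (bL i) : F) : ℝ) = x * b i := by
      change (((x : F) * (bL i : F) : F) : ℝ) = _
      simp [bL]
    have hsum := congrArg (fun y : span ℤ (Set.range b) => ((y : F) : ℝ))
      (bL.sum_repr (e (bL i)))
    simp only [AddSubmonoidClass.coe_finsetSum, SetLike.val_smul, zsmul_eq_mul] at hsum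
    push_cast at hsum
    simp only [Matrix.transpose_apply, LinearMap.toMatrix_apply, ← hei, ← hsum]
    simp [bL]

lemma exists_smul_integralClosure_mul_mem_span (b : Module.Basis (Fin n) ℚ F) :
    ∃ c : ℤ, c ≠ 0 ∧ ∀ z ∈ integralClosure ℤ F, ∀ y ∈ span ℤ (Set.range b),
      c • (z * y) ∈ span ℤ (Set.range b) := by
  have : FiniteDimensional ℚ F := .of_basis b
  have : Module.Finite ℤ (integralClosure ℤ F) := IsIntegralClosure.finite ℤ ℚ F _
  have hfg : (Subalgebra.toSubmodule (integralClosure ℤ F) * span ℤ (Set.range b)).FG :=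
    (Module.Finite.iff_fg.mp inferInstance).mul (fg_span (Set.finite_range b))
  obtain ⟨c, hc, hcM⟩ := b.exists_smul_mem_span_int_of_fg hfg
  exact ⟨c, hc, fun z hz y hy => hcM _ (mul_mem_mul hz hy)⟩

lemma exists_fin_cover_units_multSet (b : Module.Basis (Fin n) ℚ F) :
    ∃ m : ℕ, ∃ u : Fin m → (integralClosure ℤ F)ˣ,
      ∀ v : (integralClosure ℤ F)ˣ, ∃ i : Fin m, ∃ α ∈ MultSet fun i => (b i : ℝ),
        (((v : integralClosure ℤ F) : F) : ℝ) = (((u i : integralClosure ℤ F) : F) : ℝ) * α := by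
  obtain ⟨c, hc, hcL⟩ := exists_smul_integralClosure_mul_mem_span b
  let R := integralClosure ℤ F
  let I : Ideal R := Ideal.span {(c : R)}
  have : FiniteDimensional ℚ F := .of_basis b
  have : Module.Finite ℤ R := IsIntegralClosure.finite ℤ ℚ F R
  have : Module.Free ℤ R := IsIntegralClosure.module_free ℤ ℚ F R
  have : Finite (R ⧸ I) := Ideal.finiteQuotientOfFreeOfNeBot I
    (Ideal.span_singleton_eq_bot.not.mpr (Int.cast_ne_zero.mpr hc))
  let H := (Units.map (Ideal.Quotient.mk I : R →* R ⧸ I)).ker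
  have hstab : ∀ w ∈ H, ∀ y ∈ span ℤ (Set.range b),
      ((w : R) : F) * y ∈ span ℤ (Set.range b) := by
    intro w hw y hy
    obtain ⟨t, ht⟩ := Ideal.mem_span_singleton'.mp <| Ideal.Quotient.eq.mp <|
      (congrArg Units.val hw).trans (map_one _).symm
    have hwy : ((w : R) : F) * y = y + c • ((t : F) * y) := by
      rw [eq_sub_iff_add_eq] at ht
      rw [← ht]
      push_cast
      ring
    rw [hwy]
    exact add_mem hy (hcL _ t.2 _ hy)
  obtain ⟨m, u, hu⟩ := H.exists_fin_cover_of_finiteIndex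
  refine ⟨m, u, fun v => ?_⟩
  obtain ⟨i, w, hw, rfl⟩ := hu v
  exact ⟨i, _, mem_multSet_of_mul_mem_span b (Units.map (R.val : R →* F) w) (hstab w hw)
    (hstab w⁻¹ (H.inv_mem hw)), by simp⟩

end

theorem falgebraic_imp_finiteIndex_general {n : ℕ} (a : Fin n → ℝ)
    (F : Subfield ℝ) (halg : IsFAlgebraic F a) :
    MultSetFiniteIndexUnits a F := by
  obtain ⟨θ, hθ, b, hb⟩ := halg
  have ha : a = θ⁻¹ • fun i => (b i : ℝ) := by
    ext i
    simp [hb, hθ]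
  have hM : MultSet a = MultSet fun i => (b i : ℝ) := ha ▸ multSet_smul (inv_ne_zero hθ)
  exact ⟨fun α hα => exists_unit_eq_of_mem_multSet b (hM ▸ hα),
    hM ▸ exists_fin_cover_units_multSet b⟩

/-- if `a` is `F`-algebraic then `M(a)` is a finite-index
subgroup of the unit group of the ring of integers of `F`. -/
theorem falgebraic_imp_finiteIndex {n : ℕ} (hn : 2 ≤ n) (a : Fin n → ℝ)
    (ha : LinearIndependent ℚ a) (F : Subfield ℝ)
    (hF : Module.finrank ℚ F = n) (halg : IsFAlgebraic F a) :
    MultSetFiniteIndexUnits a F :=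
  falgebraic_imp_finiteIndex_general a F halg
end

section
/- Let a_1, a_2 ∈ ℝ be linearly independent over ℚ and set a = (a_1, a_2). If a is transcendental, i.e., a is not F-algebraic for any real algebraic number field F of degree 2, then M(a) = {1, −1}. -/
open Matrix

/-! Put `β = a₂ / a₁`, irrational by the independence of `a₁, a₂`. A multiplier `α` with matrix
`B` satisfies `α = B₀₀ + B₀₁ β` and `α β = B₁₀ + B₁₁ β`. If `B₀₁ ≠ 0`, eliminating `α` makes
`β` a quadratic irrationality, and then `a₁⁻¹ • a = (1, β)` is a `ℚ`-basis of the real quadratic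
field `ℚ(β)`, contradicting transcendence. If `B₀₁ = 0`, then `α = B₀₀` and irrationality of `β`
forces `B₀₀ = B₁₁`, so `det B = B₀₀²` and `α = ±1`. -/

open Polynomial IntermediateField

theorem exists_subfield_basis_pow {L : Type*} [Field L] [CharZero L] {x : L}
    (hx : IsIntegral ℚ x) {n : ℕ} (hn : (minpoly ℚ x).natDegree = n) :
    ∃ F : Subfield L, Module.finrank ℚ F = n ∧
      ∃ bas : Module.Basis (Fin n) ℚ F, ∀ i, (bas i : L) = x ^ (i : ℕ) := by
  subst hn
  -- the `ℚ`-module structures on `ℚ⟮x⟯` and on `ℚ⟮x⟯.toSubfield` agree definitionally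
  refine ⟨ℚ⟮x⟯.toSubfield, adjoin.finrank hx, ?_⟩
  refine ⟨(adjoin.powerBasis hx).basis.reindex (finCongr (adjoin.powerBasis_dim hx)), fun i => ?_⟩
  rw [Module.Basis.reindex_apply, PowerBasis.basis_eq_pow]
  simp

theorem Irrational.minpoly_natDegree_eq_two {β : ℝ} (hβ : Irrational β) {c₂ c₁ c₀ : ℚ}
    (hc₂ : c₂ ≠ 0) (hroot : c₂ * β ^ 2 + c₁ * β + c₀ = 0) :
    IsIntegral ℚ β ∧ (minpoly ℚ β).natDegree = 2 := by
  set p : ℚ[X] := C c₂ * X ^ 2 + C c₁ * X + C c₀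
  have hp : p ≠ 0 := by
    intro h
    apply hc₂
    simpa [p] using congrArg (coeff · 2) h
  have hpβ : aeval β p = 0 := by simpa [p] using hroot
  have hint : IsIntegral ℚ β := IsAlgebraic.isIntegral ⟨p, hp, hpβ⟩
  refine ⟨hint, le_antisymm ?_ ((minpoly.two_le_natDegree_iff hint).2 ?_)⟩
  · have hp2 : p.natDegree ≤ 2 := by simp only [p]; compute_degree
    exact (natDegree_le_natDegree (minpoly.degree_le_of_ne_zero ℚ β hp hpβ)).trans hp2
  · rintro ⟨q, rfl⟩
    exact hβ ⟨q, rfl⟩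

theorem irrational_div_of_linearIndependent {a₁ a₂ : ℝ} (ha : LinearIndependent ℚ ![a₁, a₂]) :
    Irrational (a₂ / a₁) := by
  have ha₁ : a₁ ≠ 0 := by simpa using ha.ne_zero 0
  rintro ⟨q, hq⟩
  have := (LinearIndependent.pair_iff.mp ha q (-1) (by simp [Rat.smul_def, hq, ha₁])).2
  norm_num at this

theorem isFAlgebraic_pair_of_basis {a₁ a₂ : ℝ} (ha₁ : a₁ ≠ 0) {F : Subfield ℝ}
    (bas : Module.Basis (Fin 2) ℚ F) (hbas : ∀ i, (bas i : ℝ) = (a₂ / a₁) ^ (i : ℕ)) :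
    IsFAlgebraic F ![a₁, a₂] := by
  refine ⟨a₁⁻¹, inv_ne_zero ha₁, bas, fun i => ?_⟩
  fin_cases i <;> simp [hbas, ha₁, div_eq_inv_mul]

theorem one_mem_multSet {n : ℕ} (a : Fin n → ℝ) : 1 ∈ MultSet a :=
  ⟨1, Or.inl det_one, fun i => by simp [one_apply]⟩

theorem neg_one_mem_multSet {n : ℕ} (a : Fin n → ℝ) : -1 ∈ MultSet a :=
  ⟨-1, by simpa [det_neg] using neg_one_pow_eq_or ℤ n, fun i => by simp [one_apply]⟩

theorem exists_matrix_of_mem_multSet_pair {a₁ a₂ α : ℝ} (ha₁ : a₁ ≠ 0)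
    (hα : α ∈ MultSet ![a₁, a₂]) :
    ∃ B : Matrix (Fin 2) (Fin 2) ℤ, (B.det = 1 ∨ B.det = -1) ∧
      α = B 0 0 + B 0 1 * (a₂ / a₁) ∧ α * (a₂ / a₁) = B 1 0 + B 1 1 * (a₂ / a₁) := by
  obtain ⟨B, hdet, hB⟩ := hα
  have h₀ := hB 0
  have h₁ := hB 1
  simp only [Fin.sum_univ_two, cons_val_zero, cons_val_one] at h₀ h₁
  refine ⟨B, hdet, ?_, ?_⟩ <;> field_simp <;> linarith

theorem eq_one_or_eq_neg_one_of_lowerTriangular {β α : ℝ} (hβ : Irrational β)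
    {B : Matrix (Fin 2) (Fin 2) ℤ} (hdet : B.det = 1 ∨ B.det = -1) (hB : B 0 1 = 0)
    (h₀ : α = B 0 0) (h₁ : α * β = B 1 0 + B 1 1 * β) : α = 1 ∨ α = -1 := by
  have hdiag : B 0 0 = B 1 1 := by
    by_contra hne
    refine (hβ.intCast_mul (sub_ne_zero.2 hne)).ne_int (B 1 0) ?_
    push_cast
    linear_combination h₁ - β * h₀
  rw [det_fin_two, hB, hdiag] at hdet
  subst h₀
  rcases hdet with h | h
  · rcases Int.eq_one_or_neg_one_of_mul_eq_one (by simpa using h) with h' | h' <;> simp [hdiag, h']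
  · nlinarith [sq_nonneg (B 1 1)]

/-- on `T²`, a transcendental frequency vector has multiplier set
exactly `{1, -1}`. -/
theorem transcendental_imp_multSet_pm_one (a₁ a₂ : ℝ)
    (ha : LinearIndependent ℚ ![a₁, a₂])
    (htr : ∀ F : Subfield ℝ, Module.finrank ℚ F = 2 →
      ¬ IsFAlgebraic F ![a₁, a₂]) :
    MultSet ![a₁, a₂] = {1, -1} := by
  have ha₁ : a₁ ≠ 0 := by simpa using ha.ne_zero 0
  have hβ := irrational_div_of_linearIndependent ha
  set β := a₂ / a₁
  refine subset_antisymm (fun α hα => ?_)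
    (Set.insert_subset_iff.2 ⟨one_mem_multSet _, by simpa using neg_one_mem_multSet _⟩)
  obtain ⟨B, hdet, h₀, h₁⟩ := exists_matrix_of_mem_multSet_pair ha₁ hα
  by_cases hB : B 0 1 = 0
  · exact eq_one_or_eq_neg_one_of_lowerTriangular hβ hdet hB (by simpa [hB] using h₀) h₁
  · obtain ⟨hint, hdeg⟩ := hβ.minpoly_natDegree_eq_two (c₂ := B 0 1) (c₁ := B 0 0 - B 1 1)
      (c₀ := -B 1 0) (by exact_mod_cast hB) (by push_cast; linear_combination h₁ - β * h₀)
    obtain ⟨F, hF, bas, hbas⟩ := exists_subfield_basis_pow hint hdeg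
    exact absurd (isFAlgebraic_pair_of_basis ha₁ bas hbas) (htr F hF)
end

section
/- Let n ≥ 2, let a = (a_1, …, a_n) ∈ ℝ^n have components linearly independent over ℚ, let C be an n×n integer matrix with nonzero determinant, and define d = (d_1, …, d_n) by d_i = Σ_{j=1}^n C_{ij}·a_j. Then for every α ∈ M(a) there exists a positive integer k such that α^k ∈ M(d). -/
/-!
If `B a = α a` with `det B = ±1`, then `B` is invertible modulo `m = det C`, so some power
satisfies `B ^ k = 1 + m N`. The integer matrix `B' = 1 + C N adj C` then intertwines:
`B' C = C B ^ k`. Hence `det B' = det B ^ k = ±1` and `B' (C a) = α ^ k (C a)`.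
-/

open Matrix

namespace Matrix

variable {ι : Type*} [Fintype ι] [DecidableEq ι]

theorem det_eq_of_mul_eq_mul {R : Type*} [CommRing R] [IsDomain R] {C M M' : Matrix ι ι R}
    (hC : C.det ≠ 0) (h : M' * C = C * M) : M'.det = M.det := by
  have := congr_arg det h
  rw [det_mul, det_mul, mul_comm C.det] at this
  exact mul_right_cancel₀ hC this

theorem exists_pow_eq_one_add_smul (B : Matrix ι ι ℤ) (hB : IsUnit B.det) {m : ℤ}
    (hm : m ≠ 0) :
    ∃ k, 0 < k ∧ ∃ N : Matrix ι ι ℤ, B ^ k = 1 + m • N := by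
  have : NeZero m.natAbs := ⟨Int.natAbs_ne_zero.mpr hm⟩
  let reduce := (Int.castRingHom (ZMod m.natAbs)).mapMatrix (m := ι)
  obtain ⟨u, hu⟩ : IsUnit (reduce B) := by
    rw [isUnit_iff_isUnit_det, ← RingHom.map_det]
    exact hB.map _
  obtain ⟨k, hk, huk⟩ := isOfFinOrder_iff_pow_eq_one.mp (isOfFinOrder_of_finite u)
  have hdvd : ∀ i j, ∃ c, (B ^ k - 1) i j = m * c := by
    intro i j
    have hzero : reduce (B ^ k - 1) = 0 := by
      rw [map_sub, map_pow, ← hu, ← Units.val_pow_eq_pow_val, huk, Units.val_one, map_one,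
        sub_self]
    have := congr_fun₂ hzero i j
    simp only [reduce, RingHom.mapMatrix_apply, map_apply, Int.coe_castRingHom, zero_apply,
      ZMod.intCast_zmod_eq_zero_iff_dvd] at this
    exact Int.natAbs_dvd.mp this
  choose N hN using hdvd
  exact ⟨k, hk, of N, by ext i j; simp [← hN]⟩

theorem one_add_mul_mul_adjugate_mul {R : Type*} [CommRing R] (C N : Matrix ι ι R) :
    (1 + C * N * C.adjugate) * C = C * (1 + C.det • N) := by
  rw [add_mul, mul_assoc, adjugate_mul, mul_add]
  simp only [Matrix.mul_smul, Matrix.mul_one, Matrix.one_mul]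

theorem pow_mulVec_eq_pow_smul {R : Type*} [CommRing R] {M : Matrix ι ι R} {v : ι → R} {c : R}
    (h : M *ᵥ v = c • v) (k : ℕ) : (M ^ k) *ᵥ v = c ^ k • v := by
  induction k with
  | zero => simp
  | succ k ih => rw [pow_succ, ← mulVec_mulVec, h, mulVec_smul, ih, smul_smul, pow_succ']

end Matrix

theorem mem_multSet_iff {n : ℕ} {a : Fin n → ℝ} {α : ℝ} :
    α ∈ MultSet a ↔
      ∃ B : Matrix (Fin n) (Fin n) ℤ,
        IsUnit B.det ∧ B.map (Int.castRingHom ℝ) *ᵥ a = α • a := by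
  simp only [MultSet, Set.mem_ofPred_eq, Int.coe_castRingHom, Int.isUnit_iff, funext_iff, mulVec,
    dotProduct, map_apply, Pi.smul_apply, smul_eq_mul, eq_comm]

theorem mem_multSet_mulVec_of_mul_eq_mul {n : ℕ} {a : Fin n → ℝ} {α : ℝ}
    {B B' C : Matrix (Fin n) (Fin n) ℤ} (hB' : IsUnit B'.det)
    (hBa : B.map (Int.castRingHom ℝ) *ᵥ a = α • a) (hcomm : B' * C = C * B) :
    α ∈ MultSet (C.map (Int.castRingHom ℝ) *ᵥ a) := by
  refine mem_multSet_iff.mpr ⟨B', hB', ?_⟩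
  rw [mulVec_mulVec, ← Matrix.map_mul, hcomm, Matrix.map_mul, ← mulVec_mulVec, hBa, mulVec_smul]

theorem multiplier_pow_mem_of_semiconjugacy_general {n : ℕ}
    (a : Fin n → ℝ)
    (C : Matrix (Fin n) (Fin n) ℤ) (hC : C.det ≠ 0)
    (d : Fin n → ℝ) (hd : ∀ i, d i = ∑ j, (C i j : ℝ) * a j) :
    ∀ α ∈ MultSet a, ∃ k : ℕ, 0 < k ∧ α ^ k ∈ MultSet d := by
  intro α hα
  obtain ⟨B, hB, hBa⟩ := mem_multSet_iff.mp hα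
  obtain ⟨k, hk, N, hN⟩ := B.exists_pow_eq_one_add_smul hB hC
  have hcomm : (1 + C * N * C.adjugate) * C = C * B ^ k := by
    rw [hN, one_add_mul_mul_adjugate_mul]
  have hdet : IsUnit (1 + C * N * C.adjugate).det := by
    rw [det_eq_of_mul_eq_mul hC hcomm, det_pow]
    exact hB.pow k
  have hd' : d = C.map (Int.castRingHom ℝ) *ᵥ a :=
    funext fun i => by simp [hd, mulVec, dotProduct]
  refine ⟨k, hk, hd' ▸ mem_multSet_mulVec_of_mul_eq_mul hdet ?_ hcomm⟩
  rw [Matrix.map_pow, pow_mulVec_eq_pow_smul hBa]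

/-- for `d = C · a` with `C` an integer matrix of nonzero
determinant, every multiplier of `a` has a positive power which is a
multiplier of `d`. -/
theorem multiplier_pow_mem_of_semiconjugacy {n : ℕ} (hn : 2 ≤ n)
    (a : Fin n → ℝ) (ha : LinearIndependent ℚ a)
    (C : Matrix (Fin n) (Fin n) ℤ) (hC : C.det ≠ 0)
    (d : Fin n → ℝ) (hd : ∀ i, d i = ∑ j, (C i j : ℝ) * a j) :
    ∀ α ∈ MultSet a, ∃ k : ℕ, 0 < k ∧ α ^ k ∈ MultSet d :=
  multiplier_pow_mem_of_semiconjugacy_general a C hC d hd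
end
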